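/- Fix λ ∈ (0,1) and n ∈ {2,3}, and with κ = κ̂ regard the discriminant R²(λ,γ) = (F_C + G_V)² - 4W₈, with all partial derivatives evaluated at P₈ = (V₊, 1+V₊) and W₈ = F_C G_V - F_V G_C, as a function of γ > 1. Then as γ → +∞, R²(λ,γ) converges to (n+1-μ)² - 8[(m-μ)(1+μ) - nμ], where μ = λ-1; this limit is positive if and only if λ ∈ (0, 1/9) when n = 3, and if and only if λ ∈ (8/9, 1) when n = 2. -/
import Mathlib


noncomputable section

/-- `V_* = (κ - 2(λ-1))/(nγ)` -/
def Vstar (n γ lam κ : ℝ) : ℝ := (κ - 2*(lam - 1)) / (n*γ)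

/-- `α = (κ(γ-1) + 2(λ-1))/(2γ)` -/
def alphaP (γ lam κ : ℝ) : ℝ := (κ*(γ - 1) + 2*(lam - 1)) / (2*γ)

/-- `k₁ = 1 + (n-1)(γ-1)/2` -/
def K1 (n γ : ℝ) : ℝ := 1 + (n - 1)*(γ - 1)/2

/-- `k₂ = ((n-1)(γ-1) + (γ-3)(λ-1))/2` -/
def K2 (n γ lam : ℝ) : ℝ := ((n - 1)*(γ - 1) + (γ - 3)*(lam - 1)) / 2

/-- `k₃ = (γ-1)(λ-1)/2` -/
def K3 (γ lam : ℝ) : ℝ := (γ - 1)*(lam - 1)/2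

/-- `G(V,C) = nC²(V - V_*) - V(1+V)(λ+V)` -/
def Gf (n γ lam κ V C : ℝ) : ℝ := n*C^2*(V - Vstar n γ lam κ) - V*(1+V)*(lam+V)

/-- `F(V,C) = C[C²(1 + α/(1+V)) - k₁(1+V)² + k₂(1+V) - k₃]` -/
def Ff (n γ lam κ V C : ℝ) : ℝ :=
  C*(C^2*(1 + alphaP γ lam κ/(1+V)) - K1 n γ*(1+V)^2 + K2 n γ lam*(1+V) - K3 γ lam)

/-- The isentropic exponent `κ̂ = 2(1-λ)/(γ-1)`. -/
def khat (γ lam : ℝ) : ℝ := 2*(1 - lam)/(γ - 1)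

/-- `a = ((γ-3)/(m(γ-1)))μ - 1`, with `m = n-1`, `μ = λ-1`. -/
def aIs (n γ lam : ℝ) : ℝ := ((γ - 3)/((n-1)*(γ - 1)))*(lam - 1) - 1

/-- `Q = ((γ-3)/(m(γ-1)))²μ² - 2((γ+1)/(m(γ-1)))μ + 1`. -/
def QIs (n γ lam : ℝ) : ℝ :=
  ((γ - 3)/((n-1)*(γ - 1)))^2*(lam - 1)^2 - 2*((γ + 1)/((n-1)*(γ - 1)))*(lam - 1) + 1

/-- `V₊ = (a + √Q)/2` in the isentropic case `κ = κ̂`. -/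
def VpIs (n γ lam : ℝ) : ℝ := (aIs n γ lam + Real.sqrt (QIs n γ lam))/2

/-- `V₋ = (a - √Q)/2` in the isentropic case `κ = κ̂`. -/
def VmIs (n γ lam : ℝ) : ℝ := (aIs n γ lam - Real.sqrt (QIs n γ lam))/2

/-- `F_C`: the partial derivative `∂F/∂C` at `P₈ = (V₊, 1+V₊)`, with `κ = κ̂`. -/
def FCd (n γ lam : ℝ) : ℝ :=
  deriv (fun C => Ff n γ lam (khat γ lam) (VpIs n γ lam) C) (1 + VpIs n γ lam)

/-- `F_V`: the partial derivative `∂F/∂V` at `P₈ = (V₊, 1+V₊)`, with `κ = κ̂`. -/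
def FVd (n γ lam : ℝ) : ℝ :=
  deriv (fun V => Ff n γ lam (khat γ lam) V (1 + VpIs n γ lam)) (VpIs n γ lam)

/-- `G_C`: the partial derivative `∂G/∂C` at `P₈ = (V₊, 1+V₊)`, with `κ = κ̂`. -/
def GCd (n γ lam : ℝ) : ℝ :=
  deriv (fun C => Gf n γ lam (khat γ lam) (VpIs n γ lam) C) (1 + VpIs n γ lam)

/-- `G_V`: the partial derivative `∂G/∂V` at `P₈ = (V₊, 1+V₊)`, with `κ = κ̂`. -/
def GVd (n γ lam : ℝ) : ℝ :=
  deriv (fun V => Gf n γ lam (khat γ lam) V (1 + VpIs n γ lam)) (VpIs n γ lam)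

/-- The discriminant `R²(λ,γ) = (F_C + G_V)² - 4(F_C G_V - F_V G_C)` at `P₈`, `κ = κ̂`. -/
def R2P (n γ lam : ℝ) : ℝ :=
  (FCd n γ lam + GVd n γ lam)^2
    - 4*(FCd n γ lam * GVd n γ lam - FVd n γ lam * GCd n γ lam)

open Filter Real

/-! ### Auxiliary material -/

lemma deriv_cubic (a b c d x : ℝ) :
    deriv (fun y : ℝ => a*y^3 + b*y^2 + c*y + d) x = 3*a*x^2 + 2*b*x + c := by
  have h := ((((hasDerivAt_pow 3 x).const_mul a).add
      ((hasDerivAt_pow 2 x).const_mul b)).add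
      ((hasDerivAt_id x).const_mul c)).add_const d
  have e : a*((3:ℕ)*x^(3-1)) + b*((2:ℕ)*x^(2-1)) + c*1 = 3*a*x^2 + 2*b*x + c := by
    push_cast; ring
  rw [← e]
  exact h.deriv

/-- The limiting form of `F_C` in the variables `V`, `W = (γ-1)V`. -/
def phiF (n lam V W : ℝ) : ℝ :=
  2*(1+V)^2 - (lam-1)*(1+V) - (W/2)*((n-1) + (n-1)*V - (lam-1))

/-- The limiting form of `G_V`. -/
def phiG (n lam V : ℝ) : ℝ :=
  n*(1+V)^2 - ((1+V)*(lam+V) + V*(lam+V) + V*(1+V))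

/-- The limiting form of the product `F_V G_C`, with `T = (γ-1)⁻¹`. -/
def phiFG (n lam V W T : ℝ) : ℝ :=
  -2*n*(1+V)^2*(W + 2*(lam-1)/n)*(T*(2*(1+V)+(lam-1)) + ((n-1) - (lam-1) + 2*(n-1)*V)/2)

/-- The discriminant in the variables `V`, `W`, `T`. -/
def phiAux (n lam V W T : ℝ) : ℝ :=
  (phiF n lam V W + phiG n lam V)^2
    - 4*(phiF n lam V W * phiG n lam V - phiFG n lam V W T)

lemma alphaP_khat (γ lam : ℝ) (hγ1 : γ - 1 ≠ 0) : alphaP γ lam (khat γ lam) = 0 := by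
  unfold alphaP khat
  rw [div_mul_cancel₀ _ hγ1]
  rw [show 2*(1 - lam) + 2*(lam - 1) = 0 by ring, zero_div]

lemma Ff_khat (n γ lam V C : ℝ) (hγ1 : γ - 1 ≠ 0) :
    Ff n γ lam (khat γ lam) V C
      = C*(C^2 - K1 n γ*(1+V)^2 + K2 n γ lam*(1+V) - K3 γ lam) := by
  unfold Ff
  rw [alphaP_khat γ lam hγ1, zero_div]
  ring

lemma FCd_eq (n γ lam : ℝ) (hγ1 : γ - 1 ≠ 0) :
    FCd n γ lam = 3*(1+VpIs n γ lam)^2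
      - (K1 n γ*(1+VpIs n γ lam)^2 - K2 n γ lam*(1+VpIs n γ lam) + K3 γ lam) := by
  set V := VpIs n γ lam with hV
  unfold FCd
  have hfun : (fun C => Ff n γ lam (khat γ lam) V C)
      = fun C => 1*C^3 + 0*C^2
          + (-(K1 n γ*(1+V)^2 - K2 n γ lam*(1+V) + K3 γ lam))*C + 0 := by
    funext C; rw [Ff_khat n γ lam V C hγ1]; ring
  rw [← hV, hfun, deriv_cubic]; ring

lemma FVd_eq (n γ lam : ℝ) (hγ1 : γ - 1 ≠ 0) :
    FVd n γ lam = -(1+VpIs n γ lam)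
      * (2*K1 n γ*(1+VpIs n γ lam) - K2 n γ lam) := by
  set V := VpIs n γ lam with hV
  unfold FVd
  have hfun : (fun V' => Ff n γ lam (khat γ lam) V' (1+V))
      = fun V' => 0*V'^3 + (-((1+V)*K1 n γ))*V'^2
          + ((1+V)*(K2 n γ lam - 2*K1 n γ))*V'
          + ((1+V)*((1+V)^2 - K1 n γ + K2 n γ lam - K3 γ lam)) := by
    funext V'; rw [Ff_khat n γ lam V' (1+V) hγ1]; ring
  rw [← hV, hfun, deriv_cubic]; ring

lemma GCd_eq (n γ lam : ℝ) :
    GCd n γ lam = 2*n*(1+VpIs n γ lam)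
      * (VpIs n γ lam - Vstar n γ lam (khat γ lam)) := by
  set V := VpIs n γ lam with hV
  unfold GCd
  have hfun : (fun C => Gf n γ lam (khat γ lam) V C)
      = fun C => 0*C^3 + (n*(V - Vstar n γ lam (khat γ lam)))*C^2 + 0*C
          + (-(V*(1+V)*(lam+V))) := by
    funext C; unfold Gf; ring
  rw [← hV, hfun, deriv_cubic]; ring

lemma GVd_eq (n γ lam : ℝ) :
    GVd n γ lam = -3*(VpIs n γ lam)^2 - 2*(1+lam)*(VpIs n γ lam)
      + (n*(1+VpIs n γ lam)^2 - lam) := by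
  set V := VpIs n γ lam with hV
  unfold GVd
  have hfun : (fun V' => Gf n γ lam (khat γ lam) V' (1+V))
      = fun V' => (-1)*V'^3 + (-(1+lam))*V'^2 + (n*(1+V)^2 - lam)*V'
          + (-(n*(1+V)^2*Vstar n γ lam (khat γ lam))) := by
    funext V'; unfold Gf; ring
  rw [← hV, hfun, deriv_cubic]; ring

lemma Vstar_khat (n γ lam : ℝ) (hn0 : n ≠ 0) (hγ0 : γ ≠ 0) (hγ1 : γ - 1 ≠ 0) :
    Vstar n γ lam (khat γ lam) = -2*(lam-1)/(n*(γ-1)) := by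
  unfold Vstar khat
  field_simp
  ring

/-- The key algebraic identity: for `γ ≠ 0, 1`, the discriminant is `phiAux` evaluated at
`V = V₊`, `W = (γ-1)V₊`, `T = (γ-1)⁻¹`. -/
lemma R2P_eq (n γ lam : ℝ) (hn0 : n ≠ 0) (hγ0 : γ ≠ 0) (hγ1 : γ - 1 ≠ 0) :
    R2P n γ lam
      = phiAux n lam (VpIs n γ lam) ((γ-1) * VpIs n γ lam) ((γ-1)⁻¹) := by
  unfold R2P
  rw [FCd_eq n γ lam hγ1, FVd_eq n γ lam hγ1, GCd_eq n γ lam, GVd_eq n γ lam,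
    Vstar_khat n γ lam hn0 hγ0 hγ1]
  unfold phiAux phiF phiG phiFG K1 K2 K3
  set V := VpIs n γ lam with hV
  field_simp
  ring

set_option maxHeartbeats 1000000

/-- for fixed `λ ∈ (0,1)` and `n ∈ {2,3}`, as `γ → +∞` the discriminant
`R²(λ,γ)` converges to `(n+1-μ)² - 8[(m-μ)(1+μ) - nμ]`, `μ = λ-1`; this limit is positive
iff `λ ∈ (0, 1/9)` when `n = 3`, and iff `λ ∈ (8/9, 1)` when `n = 2`. -/
theorem stmt_17 (n lam : ℝ) (hn : n = 2 ∨ n = 3) (h0 : 0 < lam) (h1 : lam < 1) :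
    let m := n - 1
    let μ := lam - 1
    let L := (n + 1 - μ)^2 - 8*((m - μ)*(1 + μ) - n*μ)
    Filter.Tendsto (fun γ => R2P n γ lam) Filter.atTop (nhds L) ∧
    (n = 3 → (0 < L ↔ lam ∈ Set.Ioo (0:ℝ) (1/9))) ∧
    (n = 2 → (0 < L ↔ lam ∈ Set.Ioo (8/9:ℝ) 1)) := by
  intro m μ L
  have hL : L = (n + 1 - (lam-1))^2
      - 8*(((n-1) - (lam-1))*(1 + (lam-1)) - n*(lam-1)) := rfl
  have hm1 : (1:ℝ) ≤ n - 1 := by rcases hn with h | h <;> rw [h] <;> norm_num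
  have hmpos : (0:ℝ) < n - 1 := by linarith
  have hm0 : n - 1 ≠ 0 := ne_of_gt hmpos
  have hn0 : n ≠ 0 := by rcases hn with h | h <;> rw [h] <;> norm_num
  have hμneg : lam - 1 < 0 := by linarith
  have hμ0 : lam - 1 ≠ 0 := ne_of_lt hμneg
  refine ⟨?_, ?_, ?_⟩
  · -- the Tendsto part
    -- T = (γ-1)⁻¹ → 0
    have hT : Tendsto (fun γ:ℝ => (γ - 1)⁻¹) atTop (nhds 0) := by
      have h1 : Tendsto (fun γ:ℝ => γ - 1) atTop atTop := by
        simpa [sub_eq_add_neg] using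
          tendsto_atTop_add_const_right atTop (-1) (tendsto_id (α := ℝ))
      exact tendsto_inv_atTop_zero.comp h1
    have hev : ∀ᶠ γ:ℝ in atTop, 1 < γ := eventually_gt_atTop 1
    -- a → μ/m - 1
    have hA : Tendsto (fun γ => aIs n γ lam) atTop
        (nhds ((lam-1)/(n-1) - 1)) := by
      have hbase : Tendsto (fun γ:ℝ => ((1 - 2*(γ-1)⁻¹)/(n-1))*(lam-1) - 1) atTop
          (nhds (((1 - 2*(0:ℝ))/(n-1))*(lam-1) - 1)) := by
        exact ((((tendsto_const_nhds.sub (hT.const_mul 2)).div_const (n-1)).mul_const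
          (lam-1)).sub_const 1)
      have heq : ∀ᶠ γ:ℝ in atTop, ((1 - 2*(γ-1)⁻¹)/(n-1))*(lam-1) - 1 = aIs n γ lam := by
        filter_upwards [hev] with γ hγ
        have hγ1 : γ - 1 ≠ 0 := by intro h; linarith [sub_eq_zero.mp h]
        unfold aIs; field_simp; ring
      have := hbase.congr' heq
      convert this using 2
      norm_num
      ring
    -- Q → (1 - μ/m)²
    have hQ : Tendsto (fun γ => QIs n γ lam) atTop
        (nhds ((1 - (lam-1)/(n-1))^2)) := by
      have hbase : Tendsto (fun γ:ℝ =>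
            ((1 - 2*(γ-1)⁻¹)/(n-1))^2*(lam-1)^2
              - 2*((1 + 2*(γ-1)⁻¹)/(n-1))*(lam-1) + 1) atTop
          (nhds (((1 - 2*(0:ℝ))/(n-1))^2*(lam-1)^2
              - 2*((1 + 2*(0:ℝ))/(n-1))*(lam-1) + 1)) := by
        exact (((((tendsto_const_nhds.sub (hT.const_mul 2)).div_const (n-1)).pow 2).mul_const
          ((lam-1)^2)).sub
          ((((tendsto_const_nhds.add (hT.const_mul 2)).div_const (n-1)).const_mul 2).mul_const
            (lam-1))).add_const 1
      have heq : ∀ᶠ γ:ℝ in atTop,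
          ((1 - 2*(γ-1)⁻¹)/(n-1))^2*(lam-1)^2
              - 2*((1 + 2*(γ-1)⁻¹)/(n-1))*(lam-1) + 1 = QIs n γ lam := by
        filter_upwards [hev] with γ hγ
        have hγ1 : γ - 1 ≠ 0 := by intro h; linarith [sub_eq_zero.mp h]
        unfold QIs; field_simp; ring
      have := hbase.congr' heq
      convert this using 2
      field_simp
      ring
    -- √Q → 1 - μ/m
    have hS : Tendsto (fun γ => Real.sqrt (QIs n γ lam)) atTop
        (nhds (1 - (lam-1)/(n-1))) := by
      have hnn : (0:ℝ) ≤ 1 - (lam-1)/(n-1) := by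
        have : (lam-1)/(n-1) < 0 := div_neg_of_neg_of_pos hμneg hmpos
        linarith
      have := (Real.continuous_sqrt.tendsto _).comp hQ
      rwa [Real.sqrt_sq hnn] at this
    -- W = (γ-1)V₊ → w∞
    have hden0 : (n-1)*((1 - (lam-1)/(n-1)) - ((lam-1)/(n-1) - 1)) ≠ 0 := by
      have : (lam-1)/(n-1) < 0 := div_neg_of_neg_of_pos hμneg hmpos
      have h2 : (0:ℝ) < (1 - (lam-1)/(n-1)) - ((lam-1)/(n-1) - 1) := by linarith
      exact mul_ne_zero hm0 (ne_of_gt h2)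
    have hW : Tendsto (fun γ => (γ-1) * VpIs n γ lam) atTop
        (nhds (-4*(lam-1)/((n-1)*((1 - (lam-1)/(n-1)) - ((lam-1)/(n-1) - 1))))) := by
      have hbase : Tendsto (fun γ =>
            -4*(lam-1)/((n-1)*(Real.sqrt (QIs n γ lam) - aIs n γ lam))) atTop
          (nhds (-4*(lam-1)/((n-1)*((1 - (lam-1)/(n-1)) - ((lam-1)/(n-1) - 1))))) :=
        Tendsto.div tendsto_const_nhds ((hS.sub hA).const_mul (n-1)) hden0
      refine hbase.congr' ?_
      filter_upwards [hev] with γ hγ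
      have hγ1 : γ - 1 ≠ 0 := by intro h; linarith [sub_eq_zero.mp h]
      -- Q > 0
      have hQpos : 0 < QIs n γ lam := by
        unfold QIs
        have hd : 0 < (γ+1)/((n-1)*(γ-1)) :=
          div_pos (by linarith) (mul_pos hmpos (by linarith))
        nlinarith [sq_nonneg (((γ-3)/((n-1)*(γ-1)))*(lam-1)), mul_pos hd (neg_pos.2 hμneg)]
      have hQa : QIs n γ lam - (aIs n γ lam)^2 = -8*(lam-1)/((n-1)*(γ-1)) := by
        unfold QIs aIs; field_simp; ring
      have hQa0 : QIs n γ lam - (aIs n γ lam)^2 ≠ 0 := by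
        rw [hQa]
        exact div_ne_zero (by intro h; apply hμ0; linarith)
          (mul_ne_zero hm0 hγ1)
      have hsne : Real.sqrt (QIs n γ lam) - aIs n γ lam ≠ 0 := by
        intro h
        apply hQa0
        have hs : Real.sqrt (QIs n γ lam) = aIs n γ lam := by linarith [sub_eq_zero.mp h]
        rw [← hs, Real.sq_sqrt hQpos.le]
        ring
      symm
      rw [eq_div_iff (mul_ne_zero hm0 hsne)]
      have h1 : (γ-1) * VpIs n γ lam
            * ((n-1)*(Real.sqrt (QIs n γ lam) - aIs n γ lam))
          = (n-1)*(γ-1)*((Real.sqrt (QIs n γ lam))^2 - (aIs n γ lam)^2)/2 := by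
        unfold VpIs; ring
      rw [h1, Real.sq_sqrt hQpos.le,
        show QIs n γ lam - (aIs n γ lam)^2 = -8*(lam-1)/((n-1)*(γ-1)) from hQa]
      field_simp
      ring
    -- V₊ → 0
    have hV : Tendsto (fun γ => VpIs n γ lam) atTop (nhds 0) := by
      have hbase := hW.mul hT
      rw [mul_zero] at hbase
      refine hbase.congr' ?_
      filter_upwards [hev] with γ hγ
      have hγ1 : γ - 1 ≠ 0 := by intro h; linarith [sub_eq_zero.mp h]
      field_simp
    -- continuity of phiAux
    have hcont : Continuous (fun p : ℝ × ℝ × ℝ => phiAux n lam p.1 p.2.1 p.2.2) := by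
      unfold phiAux phiF phiG phiFG
      fun_prop
    have hprod : Tendsto (fun γ:ℝ =>
          ((VpIs n γ lam, ((γ-1) * VpIs n γ lam, (γ-1)⁻¹)) : ℝ × ℝ × ℝ)) atTop
        (nhds ((0:ℝ), ((-4*(lam-1)/((n-1)*((1 - (lam-1)/(n-1)) - ((lam-1)/(n-1) - 1))) : ℝ),
          (0:ℝ)))) :=
      hV.prodMk_nhds (hW.prodMk_nhds hT)
    have hfinal := (hcont.tendsto _).comp hprod
    have heq : ∀ᶠ γ:ℝ in atTop,
        ((fun p : ℝ × ℝ × ℝ => phiAux n lam p.1 p.2.1 p.2.2) ∘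
          fun γ:ℝ => ((VpIs n γ lam, ((γ-1) * VpIs n γ lam, (γ-1)⁻¹)) : ℝ × ℝ × ℝ)) γ
        = R2P n γ lam := by
      filter_upwards [hev] with γ hγ
      have hγ1 : γ - 1 ≠ 0 := by intro h; linarith [sub_eq_zero.mp h]
      have hγ0 : γ ≠ 0 := by intro h; rw [h] at hγ; linarith
      exact (R2P_eq n γ lam hn0 hγ0 hγ1).symm
    have := hfinal.congr' heq
    have h5 : lam - n ≠ 0 := by intro h; nlinarith
    have hWval : -4*(lam-1)/((n-1)*((1 - (lam-1)/(n-1)) - ((lam-1)/(n-1) - 1)))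
        = 2*(lam-1)/(lam-n) := by
      have h2 : (n-1)*((1 - (lam-1)/(n-1)) - ((lam-1)/(n-1) - 1)) = 2*((n-1)-(lam-1)) := by
        field_simp; ring
      have h3 : (2:ℝ)*((n-1)-(lam-1)) ≠ 0 := by intro h; nlinarith
      rw [h2, div_eq_div_iff h3 h5]
      ring
    have hval : phiAux n lam 0 (2*(lam-1)/(lam-n)) 0
        = (n + 1 - (lam-1))^2 - 8*(((n-1) - (lam-1))*(1 + (lam-1)) - n*(lam-1)) := by
      unfold phiAux phiF phiG phiFG
      field_simp
      ring
    rw [hL]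
    convert this using 2
    show (n + 1 - (lam-1))^2 - 8*(((n-1) - (lam-1))*(1 + (lam-1)) - n*(lam-1))
      = phiAux n lam 0
          (-4*(lam-1)/((n-1)*((1 - (lam-1)/(n-1)) - ((lam-1)/(n-1) - 1)))) 0
    rw [hWval, hval]
  · -- n = 3 case
    intro h3
    rw [hL, h3]
    simp only [Set.mem_Ioo]
    constructor
    · intro hpos
      refine ⟨h0, ?_⟩
      nlinarith
    · intro ⟨_, hlt⟩
      nlinarith
  · -- n = 2 case
    intro h2
    rw [hL, h2]
    simp only [Set.mem_Ioo]
    constructor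
    · intro hpos
      refine ⟨?_, h1⟩
      nlinarith
    · intro ⟨hlt, _⟩
      nlinarith
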